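/- Let S be a nonempty set and, for each σ ∈ S, let P_σ be a probability measure on a common measurable sample space. Let (S_n)_{n≥1} be real random variables, and let μ be a Borel probability measure on ℝ with continuous cumulative distribution function. Suppose that for every ε > 0 there exist real random variables (U_n^ε)_{n≥1} and (V_n^ε)_{n≥1} with S_n = U_n^ε + V_n^ε for all n, such that: (i) for every a ∈ ℝ, lim_{n→∞} sup_{σ∈S} | P_σ( U_n^ε ≥ a ) − μ([a, ∞)) | = 0; and (ii) sup_{n≥1} sup_{σ∈S} P_σ( |V_n^ε| ≥ ε ) ≤ ε. Then for every a ∈ ℝ, lim_{n→∞} sup_{σ∈S} | P_σ( S_n ≥ a ) − μ([a, ∞)) | = 0. -/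

import Mathlib

/-!
Split `S_n = U_n + V_n` with `P(|V_n| ≥ ε) ≤ ε`. Up to that probability, the event `{S_n ≥ a}` is
squeezed between `{U_n ≥ a + ε}` and `{U_n ≥ a - ε}`, whose probabilities are uniformly close to
`μ[a ± ε, ∞)`. Continuity of the distribution function makes `μ` atomless, so `x ↦ μ[x, ∞)` is
continuous and `μ[a ± ε, ∞)` is close to `μ[a, ∞)` for small `ε`.
-/

open MeasureTheory ProbabilityTheory Set

namespace MeasureTheory.Measure

lemma measure_singleton_eq_zero_of_continuous_cdf (μ : Measure ℝ) [IsProbabilityMeasure μ]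
    (hcdf : Continuous fun x : ℝ => μ.real (Iic x)) (a : ℝ) : μ {a} = 0 := by
  have hcont : Continuous (cdf μ) := by
    rwa [show ⇑(cdf μ) = _ from funext (cdf_eq_real μ)]
  rw [← measure_cdf μ, StieltjesFunction.measure_singleton,
    hcont.continuousWithinAt.leftLim_eq, sub_self, ENNReal.ofReal_zero]

lemma continuous_measureReal_Ici_of_continuous_cdf (μ : Measure ℝ) [IsProbabilityMeasure μ]
    (hcdf : Continuous fun x : ℝ => μ.real (Iic x)) : Continuous fun x : ℝ => μ.real (Ici x) := by
  have hIci : ∀ x, μ.real (Ici x) = 1 - μ.real (Iic x) := fun x => by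
    rw [← measureReal_congr (Ioi_ae_eq_Ici' (measure_singleton_eq_zero_of_continuous_cdf μ hcdf x)),
      ← compl_Iic, probReal_compl_eq_one_sub measurableSet_Iic]
  exact (continuous_const.sub hcdf).congr fun x => (hIci x).symm

end MeasureTheory.Measure

section Sandwich

variable {E : Type*}

lemma setOf_le_add_subset_union (X Y : E → ℝ) (a ε : ℝ) :
    {e | a ≤ X e + Y e} ⊆ {e | a - ε ≤ X e} ∪ {e | ε ≤ |Y e|} := by
  intro e he
  by_contra! hout
  simp only [mem_union, mem_ofPred_eq, not_or, not_le] at he hout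
  linarith [le_abs_self (Y e)]

lemma measureReal_le_add_le [MeasurableSpace E] (P : Measure E) [IsFiniteMeasure P]
    (X Y : E → ℝ) (a ε : ℝ) :
    P.real {e | a ≤ X e + Y e} ≤ P.real {e | a - ε ≤ X e} + P.real {e | ε ≤ |Y e|} :=
  (measureReal_mono (setOf_le_add_subset_union X Y a ε)).trans (measureReal_union_le _ _)

lemma abs_measureReal_le_add_sub_le [MeasurableSpace E] (P : Measure E)
    [IsFiniteMeasure P] {U V : E → ℝ} {a ε c δ : ℝ} (hV : P.real {e | ε ≤ |V e|} ≤ ε)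
    (hleft : |P.real {e | a - ε ≤ U e} - c| ≤ δ) (hright : |P.real {e | a + ε ≤ U e} - c| ≤ δ) :
    |P.real {e | a ≤ U e + V e} - c| ≤ δ + ε := by
  have upper := measureReal_le_add_le P U V a ε
  -- the lower bound is the upper bound for `U = (U + V) + (-V)` at level `a + ε`
  have lower := measureReal_le_add_le P (U + V) (-V) (a + ε) ε
  simp only [Pi.add_apply, Pi.neg_apply, add_neg_cancel_right, abs_neg, add_sub_cancel_right]
    at lower
  rw [abs_le] at hleft hright ⊢
  constructor <;> linarith

end Sandwich

theorem uniform_convergence_of_truncated_decomposition_general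
    {S : Type*} {E : Type*} [MeasurableSpace E]
    (P : S → Measure E) (hP : ∀ σ, IsProbabilityMeasure (P σ))
    (Sn : ℕ → E → ℝ)
    (μ : Measure ℝ) [IsProbabilityMeasure μ]
    (hcdf : Continuous fun x : ℝ => (μ (Set.Iic x)).toReal)
    (h : ∀ ε > (0 : ℝ), ∃ U V : ℕ → E → ℝ,
      (∀ n : ℕ, Sn n = fun e => U n e + V n e) ∧
      (∀ a : ℝ, ∀ δ > (0 : ℝ), ∃ N : ℕ, ∀ n ≥ N, ∀ σ : S,
        |(P σ {e | a ≤ U n e}).toReal - (μ (Set.Ici a)).toReal| ≤ δ) ∧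
      (∀ n : ℕ, ∀ σ : S, (P σ {e | ε ≤ |V n e|}).toReal ≤ ε)) :
    ∀ a : ℝ, ∀ δ > (0 : ℝ), ∃ N : ℕ, ∀ n ≥ N, ∀ σ : S,
      |(P σ {e | a ≤ Sn n e}).toReal - (μ (Set.Ici a)).toReal| ≤ δ := by
  intro a δ hδ
  simp only [← measureReal_def] at h ⊢
  obtain ⟨η, hη, hcont⟩ := Metric.continuousAt_iff.1
    (μ.continuous_measureReal_Ici_of_continuous_cdf hcdf).continuousAt (δ / 3) (by positivity)
  simp only [Real.dist_eq] at hcont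
  set ε := min (η / 2) (δ / 3)
  have hε : 0 < ε := by positivity
  have hεη : ε < η := (min_le_left _ _).trans_lt (half_lt_self hη)
  obtain ⟨U, V, hUV, hU, hV⟩ := h ε hε
  obtain ⟨N₁, hN₁⟩ := hU (a - ε) (δ / 3) (by positivity)
  obtain ⟨N₂, hN₂⟩ := hU (a + ε) (δ / 3) (by positivity)
  refine ⟨max N₁ N₂, fun n hn σ => ?_⟩
  have := hP σ
  have hleft := (abs_sub_le _ _ _).trans <| add_le_add (hN₁ n (le_of_max_le_left hn) σ)
    (hcont (by rwa [sub_sub_cancel_left, abs_neg, abs_of_pos hε])).le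
  have hright := (abs_sub_le _ _ _).trans <| add_le_add (hN₂ n (le_of_max_le_right hn) σ)
    (hcont (by rwa [add_sub_cancel_left, abs_of_pos hε])).le
  rw [hUV]
  calc _ ≤ δ / 3 + δ / 3 + ε := abs_measureReal_le_add_sub_le (P σ) (hV n σ) hleft hright
    _ ≤ δ := by linarith [min_le_right (η / 2) (δ / 3)]

/-- If `S_n = U_n^ε + V_n^ε` where the laws of `U_n^ε` converge to `μ` on half-lines uniformly
in the parameter `σ`, and the remainders `V_n^ε` are uniformly small in probability, then the
laws of `S_n` converge to `μ` on half-lines, uniformly in `σ` (here `μ` has a continuous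
cumulative distribution function). -/
theorem uniform_convergence_of_truncated_decomposition
    {S : Type*} [Nonempty S] {E : Type*} [MeasurableSpace E]
    (P : S → Measure E) (hP : ∀ σ, IsProbabilityMeasure (P σ))
    (Sn : ℕ → E → ℝ)
    (μ : Measure ℝ) [IsProbabilityMeasure μ]
    (hcdf : Continuous fun x : ℝ => (μ (Set.Iic x)).toReal)
    (h : ∀ ε > (0 : ℝ), ∃ U V : ℕ → E → ℝ,
      (∀ n : ℕ, Sn n = fun e => U n e + V n e) ∧
      (∀ a : ℝ, ∀ δ > (0 : ℝ), ∃ N : ℕ, ∀ n ≥ N, ∀ σ : S,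
        |(P σ {e | a ≤ U n e}).toReal - (μ (Set.Ici a)).toReal| ≤ δ) ∧
      (∀ n : ℕ, ∀ σ : S, (P σ {e | ε ≤ |V n e|}).toReal ≤ ε)) :
    ∀ a : ℝ, ∀ δ > (0 : ℝ), ∃ N : ℕ, ∀ n ≥ N, ∀ σ : S,
      |(P σ {e | a ≤ Sn n e}).toReal - (μ (Set.Ici a)).toReal| ≤ δ :=
  uniform_convergence_of_truncated_decomposition_general P hP Sn μ hcdf h
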